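/- arXiv:1301.7741 — 4 statements merged into one kernel-verified Lean document; each statement's English description precedes it below -/
import Mathlib

section
/- Let n ≥ 1 and let α₁, …, αₙ be distinct positive even integers. If k = (k₁, …, kₙ) ∈ ℝⁿ and K = diag(k₁, …, kₙ) satisfy det(s·Iₙ − K·B^{−1}) = ∏_{i=1}^n (s − (αᵢ² − 1)^{−1}) as polynomials in s, then 0 < kᵢ < 1 for every i = 1, …, n. -/
/-!
Since `B` is positive definite, `K B⁻¹` is similar (via `√B`) to the symmetric matrix
`√B⁻¹ K √B⁻¹`, so the hypothesis on the characteristic polynomial puts the spectrum of that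
symmetric matrix inside `(0, 1/3]`. In the Loewner order this reads `r • B ≤ K ≤ (1/3) • B` for
some `r > 0`, and comparing diagonal entries with `0 < B_ii ≤ 2` gives `0 < k_i ≤ 2/3`.
-/

open Matrix Polynomial

noncomputable section

/-- The `n × n` tridiagonal matrix `B` of the Marx generator. -/
def marxB (n : ℕ) : Matrix (Fin n) (Fin n) ℝ :=
  Matrix.of fun i j =>
    if i = j then (if (i : ℕ) = n - 1 then ((n : ℝ) + 1) / n else 2)
    else if (i : ℕ) + 1 = (j : ℕ) ∨ (j : ℕ) + 1 = (i : ℕ) then -1 else 0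

open scoped Ring MatrixOrder

namespace CFC

variable {A : Type*} [PartialOrder A] [Ring A] [StarRing A] [TopologicalSpace A]
  [StarOrderedRing A] [Algebra ℝ A] [ContinuousFunctionalCalculus ℝ A IsSelfAdjoint]
  [NonnegSpectrumClass ℝ A] [IsSemitopologicalRing A] [T2Space A] {c : A}

omit [T2Space A] in
lemma isSelfAdjoint_conjSqrt (c : A) {a : A} (ha : IsSelfAdjoint a) :
    IsSelfAdjoint (conjSqrt c a) := by
  simpa [conjSqrt_apply, (sqrt_nonneg c).isSelfAdjoint.star_eq] using ha.conjugate (sqrt c)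

lemma conjSqrt_le_conjSqrt_iff (hc : IsStrictlyPositive c) {a b : A} :
    conjSqrt c a ≤ conjSqrt c b ↔ a ≤ b := by
  refine ⟨fun h => ?_, conjSqrt_le_conjSqrt⟩
  simpa [conjSqrt_ringInverse_conjSqrt c _ hc] using conjSqrt_le_conjSqrt (c := c⁻¹ʳ) h

lemma spectrum_conjSqrt_ringInverse (hc : IsStrictlyPositive c) (k : A) :
    spectrum ℝ (conjSqrt c⁻¹ʳ k) = spectrum ℝ (k * c⁻¹ʳ) := by
  have hs := hc.isUnit_cfcSqrt c
  have hc_inv : c⁻¹ʳ = (sqrt c)⁻¹ʳ * (sqrt c)⁻¹ʳ := by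
    conv_lhs => rw [← sqrt_mul_sqrt_self c hc.nonneg]
    exact Ring.mul_inverse_rev' (Commute.refl _)
  have hconj : conjSqrt c⁻¹ʳ k = ↑hs.unit⁻¹ * (k * c⁻¹ʳ) * ↑hs.unit := by
    rw [conjSqrt_apply, sqrt_ringInverse, hc_inv, ← Ring.inverse_unit]
    simp [mul_assoc, Ring.inverse_mul_cancel _ hs]
  rw [hconj, spectrum.units_conjugate']

lemma smul_le_iff_algebraMap_le_conjSqrt (hc : IsStrictlyPositive c) (r : ℝ) (k : A) :
    r • c ≤ k ↔ algebraMap ℝ A r ≤ conjSqrt c⁻¹ʳ k := by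
  rw [← conjSqrt_le_conjSqrt_iff hc (a := algebraMap ℝ A r), conjSqrt_conjSqrt_ringInverse c k hc]
  simp [Algebra.algebraMap_eq_smul_one, conjSqrt_one c hc.nonneg]

lemma le_smul_iff_conjSqrt_le_algebraMap (hc : IsStrictlyPositive c) (r : ℝ) (k : A) :
    k ≤ r • c ↔ conjSqrt c⁻¹ʳ k ≤ algebraMap ℝ A r := by
  rw [← conjSqrt_le_conjSqrt_iff hc (b := algebraMap ℝ A r), conjSqrt_conjSqrt_ringInverse c k hc]
  simp [Algebra.algebraMap_eq_smul_one, conjSqrt_one c hc.nonneg]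

lemma smul_le_iff_forall_le_spectrum_mul_ringInverse (hc : IsStrictlyPositive c) {k : A}
    (hk : IsSelfAdjoint k) (r : ℝ) :
    r • c ≤ k ↔ ∀ x ∈ spectrum ℝ (k * c⁻¹ʳ), r ≤ x := by
  rw [smul_le_iff_algebraMap_le_conjSqrt hc, ← spectrum_conjSqrt_ringInverse hc]
  exact algebraMap_le_iff_le_spectrum (isSelfAdjoint_conjSqrt _ hk)

lemma le_smul_iff_forall_spectrum_mul_ringInverse_le (hc : IsStrictlyPositive c) {k : A}
    (hk : IsSelfAdjoint k) (r : ℝ) :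
    k ≤ r • c ↔ ∀ x ∈ spectrum ℝ (k * c⁻¹ʳ), x ≤ r := by
  rw [le_smul_iff_conjSqrt_le_algebraMap hc, ← spectrum_conjSqrt_ringInverse hc]
  exact le_algebraMap_iff_spectrum_le (isSelfAdjoint_conjSqrt _ hk)

lemma exists_pos_smul_le_iff_forall_spectrum_mul_ringInverse_pos [Nontrivial A]
    (hc : IsStrictlyPositive c) {k : A} (hk : IsSelfAdjoint k) :
    (∃ r : ℝ, 0 < r ∧ r • c ≤ k) ↔ ∀ x ∈ spectrum ℝ (k * c⁻¹ʳ), 0 < x := by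
  simp_rw [smul_le_iff_algebraMap_le_conjSqrt hc, ← spectrum_conjSqrt_ringInverse hc]
  exact exists_pos_algebraMap_le_iff (isSelfAdjoint_conjSqrt _ hk)

end CFC

lemma Fin.sum_ite_val_eq {M : Type*} [AddCommMonoid M] {n : ℕ} (c : ℕ) (g : Fin n → M) :
    (∑ l : Fin n, if (l : ℕ) = c then g l else 0) = if h : c < n then g ⟨c, h⟩ else 0 := by
  split_ifs with h
  · rw [Finset.sum_eq_single_of_mem ⟨c, h⟩ (Finset.mem_univ _) fun l _ hl => if_neg
      fun hlc => hl (Fin.ext hlc)]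
    simp
  · exact Finset.sum_eq_zero fun l _ => if_neg fun (hlc : (l : ℕ) = c) => h (hlc ▸ l.isLt)

def diffMatrix (n : ℕ) : Matrix (Fin n) (Fin n) ℝ :=
  Matrix.of fun l j => if (l : ℕ) = j then 1 else if (l : ℕ) = j + 1 then -1 else 0

lemma det_diffMatrix (n : ℕ) : (diffMatrix n).det = 1 := by
  rw [det_of_isLowerTriangular _ fun i j (h : i < j) => by
    simp only [diffMatrix, of_apply]
    rw [if_neg (Fin.val_ne_of_ne h.ne), if_neg (by omega)]]
  exact Finset.prod_eq_one fun i _ => by simp [diffMatrix]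

lemma conjTranspose_diffMatrix_mul_self_apply (n : ℕ) (i j : Fin n) :
    ((diffMatrix n)ᴴ * diffMatrix n) i j =
      diffMatrix n i j - if h : (i : ℕ) + 1 < n then diffMatrix n ⟨i + 1, h⟩ j else 0 := by
  have hterm : ∀ l : Fin n, (diffMatrix n)ᴴ i l * diffMatrix n l j =
      (if (l : ℕ) = i then diffMatrix n l j else 0) -
        (if (l : ℕ) = i + 1 then diffMatrix n l j else 0) := by
    intro l
    simp only [conjTranspose_apply, star_trivial, diffMatrix, of_apply]
    split_ifs <;> first | omega | ring
  rw [mul_apply, Finset.sum_congr rfl fun l _ => hterm l, Finset.sum_sub_distrib,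
    Fin.sum_ite_val_eq, Fin.sum_ite_val_eq, dif_pos i.isLt]

lemma marxB_eq_conjTranspose_diffMatrix_mul_self_add (n : ℕ) :
    marxB n = (diffMatrix n)ᴴ * diffMatrix n +
      diagonal fun i : Fin n => if (i : ℕ) = n - 1 then 1 / (n : ℝ) else 0 := by
  ext i j
  have hn : (n : ℝ) ≠ 0 := by have := i.pos; positivity
  rw [Matrix.add_apply, conjTranspose_diffMatrix_mul_self_apply]
  simp only [marxB, diffMatrix, of_apply, diagonal_apply, Fin.ext_iff]
  have := i.isLt
  have := j.isLt
  split_ifs <;> first | omega | (norm_num; done) | (field_simp; ring)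

lemma marxB_posDef (n : ℕ) : (marxB n).PosDef := by
  have hD : Function.Injective (diffMatrix n).mulVec :=
    mulVec_injective_iff_isUnit.mpr <| (isUnit_iff_isUnit_det _).mpr <| by simp [det_diffMatrix]
  rw [marxB_eq_conjTranspose_diffMatrix_mul_self_add]
  refine (PosDef.conjTranspose_mul_self _ hD).add_posSemidef
    (posSemidef_diagonal_iff.mpr fun i => ?_)
  split_ifs <;> positivity

lemma marxB_apply_self_mem_Ioc {n : ℕ} (i : Fin n) : marxB n i i ∈ Set.Ioc 0 2 := by
  have hn : (1 : ℝ) ≤ n := by exact_mod_cast i.pos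
  simp only [marxB, of_apply, if_true]
  split_ifs
  · exact ⟨by positivity, by rw [div_le_iff₀ (by linarith)]; linarith⟩
  · norm_num

lemma Matrix.apply_self_le_apply_self_of_le {m : Type*} [Fintype m] {A B : Matrix m m ℝ}
    (h : A ≤ B) (i : m) : A i i ≤ B i i :=
  sub_nonneg.mp (le_iff.mp h).diag_nonneg

lemma Matrix.exists_eq_of_mem_spectrum_of_charpoly_eq_prod {K ι : Type*} [Field K]
    [Fintype ι] [DecidableEq ι] {A : Matrix ι ι K} {c : ι → K}
    (hA : A.charpoly = ∏ i, (X - C (c i))) {x : K} (hx : x ∈ spectrum K A) : ∃ i, x = c i := by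
  rw [mem_spectrum_iff_isRoot_charpoly, hA, isRoot_prod] at hx
  obtain ⟨i, -, hi⟩ := hx
  exact ⟨i, sub_eq_zero.mp (by simpa using hi)⟩

lemma inv_sq_sub_one_mem_Ioc {a : ℝ} (ha : 2 ≤ a) : (a ^ 2 - 1)⁻¹ ∈ Set.Ioc 0 (1 / 3) := by
  have h3 : 3 ≤ a ^ 2 - 1 := by nlinarith
  exact ⟨inv_pos.mpr (by linarith), by rw [one_div]; exact inv_anti₀ (by norm_num) h3⟩

theorem statement2_general (n : ℕ) (α : Fin n → ℕ)
    (hpos : ∀ i, 0 < α i) (heven : ∀ i, Even (α i))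
    (k : Fin n → ℝ)
    (hspec : (Matrix.diagonal k * (marxB n)⁻¹).charpoly
      = ∏ i, (Polynomial.X - Polynomial.C (((α i : ℝ) ^ 2 - 1)⁻¹))) :
    ∀ i, 0 < k i ∧ k i < 1 := by
  have hspectrum : ∀ x ∈ spectrum ℝ (diagonal k * (marxB n)⁻¹ʳ), x ∈ Set.Ioc 0 (1 / 3) := by
    intro x hx
    rw [← nonsing_inv_eq_ringInverse] at hx
    obtain ⟨j, rfl⟩ := exists_eq_of_mem_spectrum_of_charpoly_eq_prod hspec hx
    have h2 : 2 ≤ α j := by obtain ⟨m, hm⟩ := heven j; have := hpos j; omega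
    exact inv_sq_sub_one_mem_Ioc (by exact_mod_cast h2)
  intro i
  have : Nonempty (Fin n) := ⟨i⟩
  have hB := (marxB_posDef n).isStrictlyPositive
  have hK := (isHermitian_diagonal k).isSelfAdjoint
  obtain ⟨r, hr, hlower⟩ :=
    (CFC.exists_pos_smul_le_iff_forall_spectrum_mul_ringInverse_pos hB hK).mpr
      fun x hx => (hspectrum x hx).1
  have hupper := (CFC.le_smul_iff_forall_spectrum_mul_ringInverse_le hB hK (1 / 3)).mpr
    fun x hx => (hspectrum x hx).2
  have h1 := apply_self_le_apply_self_of_le hlower i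
  have h2 := apply_self_le_apply_self_of_le hupper i
  simp only [Matrix.smul_apply, diagonal_apply_eq, smul_eq_mul] at h1 h2
  obtain ⟨hB0, hB2⟩ := marxB_apply_self_mem_Ioc i
  exact ⟨by nlinarith, by linarith⟩

/-- Lemma 2 of the paper: any solution `k` of the inverse
eigenvalue problem `σ(K B⁻¹) = {(αᵢ² - 1)⁻¹}`, with the `αᵢ` distinct positive
even integers, satisfies `0 < kᵢ < 1` for all `i`. -/
theorem statement2 (n : ℕ) (hn : 1 ≤ n) (α : Fin n → ℕ)
    (hdist : Function.Injective α) (hpos : ∀ i, 0 < α i) (heven : ∀ i, Even (α i))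
    (k : Fin n → ℝ)
    (hspec : (Matrix.diagonal k * (marxB n)⁻¹).charpoly
      = ∏ i, (Polynomial.X - Polynomial.C (((α i : ℝ) ^ 2 - 1)⁻¹))) :
    ∀ i, 0 < k i ∧ k i < 1 :=
  statement2_general n α hpos heven k hspec

end
end

section
/- Let n ≥ 1. Then B = Σ·J_{n+1}^{−1}·Σᵀ, and B is a symmetric positive definite matrix. -/
open Matrix Polynomial

noncomputable section

/-- The `n × (n+1)` difference matrix `Σ`. -/
def marxSigma (n : ℕ) : Matrix (Fin n) (Fin (n + 1)) ℝ :=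
  Matrix.of fun i j =>
    if (j : ℕ) = (i : ℕ) then 1 else if (j : ℕ) = (i : ℕ) + 1 then -1 else 0

/-- `J_{n+1} = diag(1, …, 1, n)`. -/
def marxJ (n : ℕ) : Matrix (Fin (n + 1)) (Fin (n + 1)) ℝ :=
  Matrix.diagonal fun j => if (j : ℕ) = n then (n : ℝ) else 1

/-
`B` is the Gram-type matrix `Σ D Σᵀ` of the difference operator `Σ` with weights
`D = J⁻¹ = diag(1, …, 1, 1/n)`: the `(i, k)` entry is `d_i δ_{ik} - d_{i+1} δ_{i+1,k}`
`- d_i δ_{i,k+1} + d_{i+1} δ_{i+1,k+1}`, giving `1 + 1 = 2` (or `1 + 1/n`) on the diagonal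
and `-1` next to it. Positive definiteness then follows because `D` is positive definite and
`Σ` has full row rank, witnessed by the right inverse `T` with `T_{ji} = [j ≤ i]`.
-/

lemma Matrix.inv_diagonal_of_ne_zero {n K : Type*} [Fintype n] [DecidableEq n] [Field K]
    {d : n → K} (hd : ∀ i, d i ≠ 0) : (diagonal d)⁻¹ = diagonal fun i => (d i)⁻¹ :=
  inv_eq_right_inv <| by simp [diagonal_mul_diagonal, hd]

section

variable {n : ℕ}

lemma sum_marxSigma_mul (i : Fin n) (f : Fin (n + 1) → ℝ) :
    ∑ j, marxSigma n i j * f j = f i.castSucc - f i.succ := by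
  have hrow : ∀ j, marxSigma n i j
      = (if j = i.castSucc then 1 else 0) - (if j = i.succ then 1 else 0) := by
    intro j
    simp only [marxSigma, of_apply, Fin.ext_iff, Fin.val_castSucc, Fin.val_succ]
    split_ifs <;> first | omega | norm_num
  simp [hrow, sub_mul, Finset.sum_sub_distrib]

lemma marxSigma_mul_diagonal_mul_transpose_apply (d : Fin (n + 1) → ℝ) (i k : Fin n) :
    (marxSigma n * diagonal d * (marxSigma n)ᵀ) i k
      = d i.castSucc * marxSigma n k i.castSucc - d i.succ * marxSigma n k i.succ := by
  rw [Matrix.mul_assoc, mul_apply]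
  simp only [diagonal_mul, transpose_apply]
  exact sum_marxSigma_mul i _

lemma marxJ_inv (hn : n ≠ 0) :
    (marxJ n)⁻¹ = diagonal fun j : Fin (n + 1) => if (j : ℕ) = n then (n : ℝ)⁻¹ else 1 := by
  rw [marxJ, inv_diagonal_of_ne_zero fun j => by split_ifs <;> simp [hn]]
  congr! 2
  split_ifs <;> simp

lemma marxB_eq_marxSigma_mul_inv_mul_transpose (hn : n ≠ 0) :
    marxB n = marxSigma n * (marxJ n)⁻¹ * (marxSigma n)ᵀ := by
  have hn' : (n : ℝ) ≠ 0 := Nat.cast_ne_zero.mpr hn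
  ext i k
  rw [marxJ_inv hn, marxSigma_mul_diagonal_mul_transpose_apply]
  simp only [marxB, marxSigma, of_apply, Fin.ext_iff, Fin.val_castSucc, Fin.val_succ]
  split_ifs <;> first | omega | (field_simp; ring)

lemma marxJ_posDef (hn : n ≠ 0) : (marxJ n).PosDef :=
  posDef_diagonal_iff.mpr fun j => by
    split_ifs
    · exact_mod_cast Nat.pos_of_ne_zero hn
    · exact one_pos

def marxT (n : ℕ) : Matrix (Fin (n + 1)) (Fin n) ℝ :=
  of fun j i => if (j : ℕ) ≤ i then 1 else 0

lemma marxSigma_mul_marxT : marxSigma n * marxT n = 1 := by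
  ext i k
  rw [mul_apply, sum_marxSigma_mul]
  simp only [marxT, of_apply, Fin.val_castSucc, Fin.val_succ, one_apply, Fin.ext_iff]
  split_ifs <;> first | omega | norm_num

lemma marxSigma_vecMul_injective : Function.Injective (marxSigma n).vecMul :=
  Function.LeftInverse.injective (g := (marxT n).vecMul) fun x => by
    simp only [vecMul_vecMul, marxSigma_mul_marxT, vecMul_one]

end

/-- `B = Σ·J_{n+1}⁻¹·Σᵀ`, and `B` is symmetric positive definite. -/
theorem statement8 (n : ℕ) (hn : 1 ≤ n) :
    marxB n = marxSigma n * (marxJ n)⁻¹ * (marxSigma n)ᵀ ∧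
    (marxB n).IsSymm ∧ (marxB n).PosDef := by
  have hn0 : n ≠ 0 := Nat.one_le_iff_ne_zero.mp hn
  have hfac := marxB_eq_marxSigma_mul_inv_mul_transpose hn0
  have hpos : (marxB n).PosDef := by
    rw [hfac, ← conjTranspose_eq_transpose_of_trivial]
    exact (marxJ_posDef hn0).inv.mul_mul_conjTranspose_same marxSigma_vecMul_injective
  refine ⟨hfac, ?_, hpos⟩
  rw [IsSymm, ← conjTranspose_eq_transpose_of_trivial]
  exact hpos.isHermitian

end
end

section
/- Let n ≥ 2. Then every diagonal entry of B^{−1} is strictly greater than 1/2; moreover for n = 1 the unique entry of B^{−1} equals 1/2. -/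
/-!
Extend a column of `B⁻¹` to a sequence `g` on `ℤ` by `g (-1) = 0` and
`n g(n) = (n - 1) g(n - 1)`; since `(n + 1)/n = 2 - (n - 1)/n`, on such sequences `B` acts as
the negative second difference `2 g(i) - g(i - 1) - g(i + 1)`. Hence `B⁻¹` is the Green's
function of the second difference with these boundary conditions,
`G(i, k) = (min(i, k) + 1)(2n - 1 - max(i, k)) / (2n)` (indices from `0`): it is linear on
either side of `k`, and its slope drops by `(2n)/(2n) = 1` at `k`.
The diagonal entries are `(i + 1)(2n - 1 - i) / (2n)`, which exceed `1/2` when `n ≥ 2`.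
-/

open Matrix Polynomial

noncomputable section

lemma Fin.sum_ite_intCast_eq_mul {n : ℕ} (m : ℤ) (c : ℝ) (g : ℤ → ℝ) :
    ∑ j : Fin n, (if (j : ℤ) = m then c else 0) * g j =
      if 0 ≤ m ∧ m < n then c * g m else 0 := by
  split_ifs with hm
  · lift m to ℕ using hm.1
    rw [Finset.sum_eq_single ⟨m, by omega⟩ (fun j _ hj => by simp_all [Fin.ext_iff]) (by simp)]
    simp
  · exact Finset.sum_eq_zero fun j _ => by rw [if_neg (by omega), zero_mul]

lemma marxB_apply {n : ℕ} (i j : Fin n) :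
    marxB n i j =
      (if (j : ℤ) = i then (if (i : ℕ) = n - 1 then ((n : ℝ) + 1) / n else 2) else 0)
      + (if (j : ℤ) = i - 1 then -1 else 0) + (if (j : ℤ) = i + 1 then -1 else 0) := by
  simp only [marxB, of_apply, Fin.ext_iff]
  split_ifs <;> first | omega | ring

lemma sum_marxB_mul {n : ℕ} (i : Fin n) (g : ℤ → ℝ) (hg₀ : g (-1) = 0)
    (hgn : n * g n = (n - 1) * g (n - 1)) :
    ∑ j, marxB n i j * g j = 2 * g i - g (i - 1) - g (i + 1) := by
  simp only [marxB_apply, add_mul, Finset.sum_add_distrib, Fin.sum_ite_intCast_eq_mul]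
  have hi := i.isLt
  have hprev :
      (if 0 ≤ (i : ℤ) - 1 ∧ (i : ℤ) - 1 < n then -1 * g (i - 1) else 0) = -g (i - 1) := by
    split_ifs with h
    · ring
    · rw [show (i : ℤ) - 1 = -1 by omega, hg₀, neg_zero]
  rw [hprev, if_pos (by omega)]
  by_cases hlast : (i : ℕ) = n - 1
  · have hn : (n : ℝ) ≠ 0 := Nat.cast_ne_zero.mpr (by omega)
    have hin : (i : ℤ) + 1 = n := by omega
    rw [if_pos hlast, if_neg (by omega), hin, show (i : ℤ) = n - 1 by omega]
    field_simp
    linear_combination hgn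
  · rw [if_neg hlast, if_pos (by omega)]
    ring

def marxGreen (n : ℕ) (i k : ℤ) : ℝ :=
  ((min i k : ℤ) + 1) * (2 * n - 1 - (max i k : ℤ)) / (2 * n)

lemma marxGreen_neg_one {n : ℕ} {k : ℤ} (hk : 0 ≤ k) : marxGreen n (-1) k = 0 := by
  simp [marxGreen, min_eq_left (by omega : (-1 : ℤ) ≤ k)]

lemma marxGreen_boundary {n : ℕ} {k : ℤ} (hk : k < n) :
    n * marxGreen n n k = (n - 1) * marxGreen n (n - 1) k := by
  simp only [marxGreen, min_eq_right hk.le, max_eq_left hk.le,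
    min_eq_right (by omega : k ≤ (n : ℤ) - 1), max_eq_left (by omega : k ≤ (n : ℤ) - 1)]
  push_cast
  ring

lemma marxGreen_second_diff {n : ℕ} (hn : n ≠ 0) (i k : ℤ) :
    2 * marxGreen n i k - marxGreen n (i - 1) k - marxGreen n (i + 1) k =
      if i = k then 1 else 0 := by
  have hn' : (n : ℝ) ≠ 0 := Nat.cast_ne_zero.mpr hn
  unfold marxGreen
  rcases lt_trichotomy i k with h | rfl | h
  · rw [if_neg h.ne, min_eq_left h.le, max_eq_right h.le, min_eq_left (by omega : i - 1 ≤ k),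
      max_eq_right (by omega : i - 1 ≤ k), min_eq_left (by omega : i + 1 ≤ k),
      max_eq_right (by omega : i + 1 ≤ k)]
    push_cast
    ring
  · rw [if_pos rfl, min_self, max_self, min_eq_left (by omega : i - 1 ≤ i),
      max_eq_right (by omega : i - 1 ≤ i), min_eq_right (by omega : i ≤ i + 1),
      max_eq_left (by omega : i ≤ i + 1)]
    push_cast
    field_simp
    ring
  · rw [if_neg h.ne', min_eq_right h.le, max_eq_left h.le, min_eq_right (by omega : k ≤ i - 1),
      max_eq_left (by omega : k ≤ i - 1), min_eq_right (by omega : k ≤ i + 1),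
      max_eq_left (by omega : k ≤ i + 1)]
    push_cast
    ring

lemma marxB_mul_marxGreen (n : ℕ) :
    marxB n * Matrix.of (fun i k : Fin n => marxGreen n i k) = 1 := by
  ext i k
  have hn : n ≠ 0 := Fin.pos_iff_nonempty.mpr ⟨i⟩ |>.ne'
  simp only [mul_apply, of_apply, one_apply]
  rw [sum_marxB_mul i (marxGreen n · k) (marxGreen_neg_one (by omega))
    (marxGreen_boundary (by omega)), marxGreen_second_diff hn]
  simp [Fin.ext_iff]

lemma inv_marxB (n : ℕ) : (marxB n)⁻¹ = Matrix.of (fun i k : Fin n => marxGreen n i k) :=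
  inv_eq_right_inv (marxB_mul_marxGreen n)

lemma one_half_lt_marxGreen_self {n : ℕ} (hn : 2 ≤ n) {i : ℤ} (hi₀ : 0 ≤ i)
    (hin : i < n) :
    1 / 2 < marxGreen n i i := by
  have hn' : (2 : ℝ) ≤ n := by exact_mod_cast hn
  have hi₀' : (0 : ℝ) ≤ i := by exact_mod_cast hi₀
  have hin' : (i : ℝ) + 1 ≤ n := by exact_mod_cast hin
  rw [marxGreen, min_self, max_self, lt_div_iff₀ (by positivity)]
  nlinarith [mul_nonneg hi₀' (by linarith : (0 : ℝ) ≤ n - 1 - i),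
    mul_nonneg hi₀' (by linarith : (0 : ℝ) ≤ n - 2)]

/-- for `n ≥ 2` every diagonal entry of `B⁻¹` is strictly greater
than `1/2`; moreover for `n = 1` the unique entry of `B⁻¹` equals `1/2`. -/
theorem statement9 (n : ℕ) (hn : 2 ≤ n) :
    (∀ i, 1 / 2 < (marxB n)⁻¹ i i) ∧ (∀ i : Fin 1, (marxB 1)⁻¹ i i = 1 / 2) := by
  refine ⟨fun i => ?_, fun i => ?_⟩
  · rw [inv_marxB, of_apply]
    exact one_half_lt_marxGreen_self hn (by omega) (by omega)
  · fin_cases i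
    rw [inv_marxB, of_apply]
    norm_num [marxGreen]

end
end

section
/- Let n ≥ 1, ℓ > 0, c > 0, and let F = diag(f₁, …, fₙ) with fᵢ > 0. Then there exists an invertible real matrix N ∈ ℝ^{n×n} with Nᵀ·N = Iₙ + √F·B·√F such that A₀ is similar over ℝ to the block-diagonal matrix ω₀ · blockdiag( 0_{n×n}, [[0, 1],[−1, 0]], [[0_{n×n}, Nᵀ],[−N, 0_{n×n}]] ). -/
/-!
Put `K = √F Σ J^{-1/2}`, so that `K Kᵀ = √F B √F` because `B = Σ J⁻¹ Σᵀ`. Rescaling the three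
coordinate blocks of `A₀` by `√F`, `J₋₁ J^{-1/2}` and `√(c/ℓ) J₋₁ J^{-1/2}` turns it into `ω₀ S`
with `S = [[0, 0, -K], [0, 0, I], [Kᵀ, -I, 0]]`. Let `z = J^{1/2} 1`, which spans the kernel of `K`,
and let `N` be any matrix with `Nᵀ N = I + K Kᵀ` (it exists since `I + K Kᵀ` is positive definite).
Then `S` kills the columns `(a, Kᵀ a, 0)`, rotates the pair `(0, z, 0)`, `(0, 0, z)`, and maps
`X₃ = (-K Kᵀ, Kᵀ, 0)`, `X₄ = (0, 0, Kᵀ Nᵀ)` to `-X₄ N` and `X₃ Nᵀ`. These column blocks are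
mutually orthogonal, and their Gram matrices `Nᵀ N`, `|z|² I`, `K Kᵀ Nᵀ N`, `N K Kᵀ Nᵀ` are
invertible because `K` has a right inverse; so they form a basis in which `S` is the normal form.
-/

open Matrix Polynomial

noncomputable section

/-- `J_{-1} = diag(1, …, 1, -1)` of size `n+1`. -/
def marxJm (n : ℕ) : Matrix (Fin (n + 1)) (Fin (n + 1)) ℝ :=
  Matrix.diagonal fun j => if (j : ℕ) = n then (-1 : ℝ) else 1

/-- The `(3n+2) × (3n+2)` state transition matrix `A₀` of the Marx circuit,
indexed by `(Fin n ⊕ Fin (n+1)) ⊕ Fin (n+1)`, the `2n+1` voltages followed by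
the `n+1` currents. -/
def marxA0 (n : ℕ) (ℓ c : ℝ) (f : Fin n → ℝ) :
    Matrix ((Fin n ⊕ Fin (n + 1)) ⊕ Fin (n + 1))
      ((Fin n ⊕ Fin (n + 1)) ⊕ Fin (n + 1)) ℝ :=
  Matrix.fromBlocks 0
    (Matrix.fromRows (-(1 / c) • (Matrix.diagonal f * marxSigma n * marxJm n))
      ((1 / c) • (1 : Matrix (Fin (n + 1)) (Fin (n + 1)) ℝ)))
    (Matrix.fromCols ((1 / ℓ) • ((marxJ n)⁻¹ * marxJm n * (marxSigma n)ᵀ))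
      (-(1 / ℓ) • (1 : Matrix (Fin (n + 1)) (Fin (n + 1)) ℝ)))
    0

section BlockMatrices

variable {R : Type*} [CommRing R]

theorem smul_fromRows {m₁ m₂ n : Type*} (r : R) (A : Matrix m₁ n R) (B : Matrix m₂ n R) :
    r • fromRows A B = fromRows (r • A) (r • B) := by
  ext (i | i) j <;> rfl

theorem smul_fromCols {m n₁ n₂ : Type*} (r : R) (A : Matrix m n₁ R) (B : Matrix m n₂ R) :
    r • fromCols A B = fromCols (r • A) (r • B) := by
  ext i (j | j) <;> rfl

theorem det_transpose_mul_self_fromCols {ι m₁ m₂ : Type*} [Fintype ι] [Fintype m₁] [Fintype m₂]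
    [DecidableEq m₁] [DecidableEq m₂] (A : Matrix ι m₁ R) (B : Matrix ι m₂ R) (h : Aᵀ * B = 0) :
    ((fromCols A B)ᵀ * fromCols A B).det = (Aᵀ * A).det * (Bᵀ * B).det := by
  have h' : Bᵀ * A = 0 := by simpa using congrArg transpose h
  rw [transpose_fromCols, fromRows_mul_fromCols, h, h', det_fromBlocks_zero₁₂]

variable {ι κ κ' : Type*} [Fintype ι] [Fintype κ] [Fintype κ'] [DecidableEq κ]

theorem exists_conj_reindex_eq_of_mul_eq (e : ι ≃ κ) (σ : κ' ≃ κ) {A : Matrix ι ι R}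
    {M : Matrix κ' κ' R} {Q : Matrix ι κ' R} (hQ : IsUnit (reindex e σ Q).det)
    (h : A * Q = Q * M) :
    ∃ P : Matrix κ κ R, IsUnit P.det ∧ P * reindex e e A * P⁻¹ = reindex σ σ M := by
  have hQM : reindex e e A * reindex e σ Q = reindex e σ Q * reindex σ σ M := by
    simp only [reindex_apply, submatrix_mul_equiv, h]
  refine ⟨(reindex e σ Q)⁻¹, isUnit_nonsing_inv_det_iff.mpr hQ, ?_⟩
  rw [nonsing_inv_nonsing_inv _ hQ, Matrix.mul_assoc, hQM, ← Matrix.mul_assoc,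
    nonsing_inv_mul _ hQ, Matrix.one_mul]

theorem isUnit_det_reindex_mul [DecidableEq ι] [DecidableEq κ'] (e : ι ≃ κ) (σ : κ' ≃ κ)
    {T : Matrix ι ι R} {Q : Matrix ι κ' R} (hT : IsUnit T.det) (hQ : IsUnit (Qᵀ * Q).det) :
    IsUnit (reindex e σ (T * Q)).det := by
  have hgram : IsUnit ((reindex e σ Q)ᵀ * reindex e σ Q).det := by
    rwa [transpose_reindex, reindex_apply, reindex_apply, submatrix_mul_equiv, ← reindex_apply,
      det_reindex_self]
  rw [det_mul, det_transpose] at hgram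
  rw [reindex_apply, ← submatrix_mul_equiv T Q e.symm e.symm σ.symm, det_mul, ← reindex_apply,
    det_reindex_self]
  exact hT.mul (isUnit_of_mul_isUnit_left hgram)

end BlockMatrices

theorem diagonal_inv_mul_diagonal {ι K : Type*} [Fintype ι] [DecidableEq ι] [Field K]
    {d : ι → K} (hd : ∀ i, d i ≠ 0) : diagonal d⁻¹ * diagonal d = 1 := by
  rw [diagonal_mul_diagonal, ← diagonal_one]
  exact congrArg diagonal (funext fun i => inv_mul_cancel₀ (hd i))

theorem posDef_mul_transpose_of_mul_eq_one {m n : Type*} [Fintype m] [Fintype n]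
    [DecidableEq m] {A : Matrix m n ℝ} {B : Matrix n m ℝ} (h : A * B = 1) :
    (A * Aᵀ).PosDef := by
  have hinj : Function.Injective fun v => v ᵥ* A := fun v w hvw => by
    simpa [vecMul_vecMul, h] using congrArg (· ᵥ* B) hvw
  simpa [conjTranspose_eq_transpose_of_trivial] using PosDef.mul_conjTranspose_self _ hinj

theorem exists_isUnit_det_transpose_mul_self_eq {ι : Type*} [Fintype ι] [DecidableEq ι]
    {A : Matrix ι ι ℝ} (hA : A.PosDef) : ∃ N : Matrix ι ι ℝ, IsUnit N.det ∧ Nᵀ * N = A := by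
  open scoped MatrixOrder in
  obtain ⟨N, rfl⟩ := CStarAlgebra.nonneg_iff_eq_star_mul_self.mp hA.posSemidef.nonneg
  refine ⟨N, ?_, rfl⟩
  have hdet := hA.det_pos
  rw [star_eq_conjTranspose, conjTranspose_eq_transpose_of_trivial, det_mul, det_transpose] at hdet
  exact isUnit_iff_ne_zero.mpr fun h => by simp [h] at hdet

section CircuitMatrices

variable {R : Type*} [CommRing R] {m k p : Type*}

def circuitMatrix [DecidableEq k] (a b : R) (X : Matrix m k R) (Y : Matrix k m R) :
    Matrix ((m ⊕ k) ⊕ k) ((m ⊕ k) ⊕ k) R :=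
  fromBlocks 0 (fromRows (-a • X) (a • 1)) (fromCols (b • Y) (-b • 1)) 0

def circuitScaling (E : Matrix m m R) (Dinv : Matrix k k R) (τ : R) :
    Matrix ((m ⊕ k) ⊕ k) ((m ⊕ k) ⊕ k) R :=
  fromBlocks (fromBlocks E 0 0 Dinv) 0 0 (τ • Dinv)

def skewGenerator [DecidableEq k] (K : Matrix m k R) : Matrix ((m ⊕ k) ⊕ k) ((m ⊕ k) ⊕ k) R :=
  circuitMatrix 1 1 K Kᵀ

def skewNormalForm [DecidableEq p] (N : Matrix m m R) :
    Matrix (m ⊕ ((p ⊕ p) ⊕ (m ⊕ m))) (m ⊕ ((p ⊕ p) ⊕ (m ⊕ m))) R :=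
  fromBlocks 0 0 0 (fromBlocks (fromBlocks 0 1 (-1) 0) 0 0 (fromBlocks 0 Nᵀ (-N) 0))

theorem smul_circuitMatrix [DecidableEq k] (r a b : R) (X : Matrix m k R) (Y : Matrix k m R) :
    r • circuitMatrix a b X Y = circuitMatrix (r * a) (r * b) X Y := by
  simp [circuitMatrix, fromBlocks_smul, smul_fromRows, smul_fromCols, smul_smul]

variable [Fintype m] [Fintype k] [Fintype p] [DecidableEq m] [DecidableEq p]

def skewBasis (K : Matrix m k R) (Z : Matrix k p R) (N : Matrix m m R) :
    Matrix ((m ⊕ k) ⊕ k) (m ⊕ ((p ⊕ p) ⊕ (m ⊕ m))) R :=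
  fromCols (fromRows (fromRows 1 Kᵀ) 0)
    (fromCols (fromCols (fromRows (fromRows 0 Z) 0) (fromRows 0 Z))
      (fromCols (fromRows (fromRows (-(K * Kᵀ)) Kᵀ) 0) (fromRows 0 (Kᵀ * Nᵀ))))

theorem circuitMatrix_mul_circuitScaling [DecidableEq k] (K : Matrix m k R)
    {E Einv : Matrix m m R} {D Dinv : Matrix k k R} (a τ : R) (hE : Einv * E = 1)
    (hD : D * Dinv = 1) :
    circuitMatrix a (a * τ * τ) (E * K * D) (Dinv * Kᵀ * Einv) * circuitScaling E Dinv τ =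
      circuitScaling E Dinv τ * ((a * τ) • skewGenerator K) := by
  rw [skewGenerator, smul_circuitMatrix, mul_one]
  simp [circuitMatrix, circuitScaling, fromBlocks_multiply, fromBlocks_mul_fromRows,
    fromCols_mul_fromBlocks, Matrix.mul_assoc, hE, hD, smul_smul, smul_fromRows, smul_fromCols,
    mul_comm, mul_left_comm]

theorem isUnit_det_circuitScaling [DecidableEq k] {E : Matrix m m R} {Dinv : Matrix k k R}
    {τ : R} (hE : IsUnit E.det) (hD : IsUnit Dinv.det) (hτ : IsUnit τ) :
    IsUnit (circuitScaling E Dinv τ).det := by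
  simp [circuitScaling, hE, hD, hτ.pow, IsUnit.mul_iff]

variable (K : Matrix m k R) (Z : Matrix k p R) (N : Matrix m m R)

theorem skewGenerator_mul_skewBasis [DecidableEq k] (hZ : K * Z = 0)
    (hN : Nᵀ * N = 1 + K * Kᵀ) :
    skewGenerator K * skewBasis K Z N = skewBasis K Z N * skewNormalForm (p := p) N := by
  simp [skewGenerator, circuitMatrix, skewBasis, skewNormalForm, fromBlocks_mul_fromRows,
    fromCols_mul_fromBlocks, fromCols_mul_fromRows, fromBlocks_multiply, Matrix.mul_assoc, hZ, hN,
    Matrix.mul_add, add_comm]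

theorem isUnit_det_transpose_mul_self_skewBasis (hZ : K * Z = 0) (hN : Nᵀ * N = 1 + K * Kᵀ)
    (hK : IsUnit (K * Kᵀ).det) (hZZ : IsUnit (Zᵀ * Z).det) (hNu : IsUnit N.det) :
    IsUnit ((skewBasis K Z N)ᵀ * skewBasis K Z N).det := by
  have hZ' : Zᵀ * Kᵀ = 0 := by rw [← transpose_mul, hZ, transpose_zero]
  have hZN : Zᵀ * (Kᵀ * Nᵀ) = 0 := by rw [← Matrix.mul_assoc, hZ', Matrix.zero_mul]
  rw [skewBasis, det_transpose_mul_self_fromCols, det_transpose_mul_self_fromCols,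
    det_transpose_mul_self_fromCols, det_transpose_mul_self_fromCols]
  -- besides the main goal, this closes the orthogonality side conditions of the four rewrites
  all_goals simp [transpose_fromRows, fromBlocks_transpose, fromCols_mul_fromRows,
    fromCols_mul_fromBlocks, fromBlocks_multiply, Matrix.mul_assoc, hZ, hZ', hZN]
  have hX₃ : K * (Kᵀ * (K * Kᵀ)) + K * Kᵀ = K * Kᵀ * (Nᵀ * N) := by
    rw [hN, Matrix.mul_add, Matrix.mul_one, add_comm, Matrix.mul_assoc]
  rw [← hN, hX₃, ← Matrix.mul_assoc K Kᵀ Nᵀ]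
  simp [IsUnit.mul_iff, hK, hNu, hZZ]

end CircuitMatrices

def skewNormalFormEquiv (m : Type*) : m ⊕ ((Fin 1 ⊕ Fin 1) ⊕ (m ⊕ m)) ≃ m ⊕ (Fin 2 ⊕ (m ⊕ m)) :=
  (Equiv.refl m).sumCongr (finSumFinEquiv.sumCongr (Equiv.refl (m ⊕ m)))

theorem reindex_skewNormalForm {R : Type*} [CommRing R] {m : Type*} (N : Matrix m m R) :
    reindex (skewNormalFormEquiv m) (skewNormalFormEquiv m) (skewNormalForm (p := Fin 1) N) =
      fromBlocks 0 0 0 (fromBlocks !![(0 : R), 1; -1, 0] 0 0 (fromBlocks 0 Nᵀ (-N) 0)) := by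
  ext (i | (i | i)) (j | (j | j))
  all_goals try fin_cases i
  all_goals try fin_cases j
  all_goals rfl

section Marx

variable {n : ℕ}

def marxSqrtJ (n : ℕ) : Fin (n + 1) → ℝ := fun j => if (j : ℕ) = n then √n else 1

def marxK (n : ℕ) (f : Fin n → ℝ) : Matrix (Fin n) (Fin (n + 1)) ℝ :=
  diagonal (fun i => √(f i)) * marxSigma n * diagonal (marxSqrtJ n)⁻¹

def marxZ (n : ℕ) : Matrix (Fin (n + 1)) (Fin 1) ℝ := of fun j _ => marxSqrtJ n j

theorem marxSqrtJ_pos (hn : 1 ≤ n) (j : Fin (n + 1)) : 0 < marxSqrtJ n j := by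
  unfold marxSqrtJ
  split_ifs
  · exact Real.sqrt_pos.2 (Nat.cast_pos.2 hn)
  · exact one_pos

theorem inv_marxJ (hn : 1 ≤ n) :
    (marxJ n)⁻¹ = diagonal (marxSqrtJ n)⁻¹ * diagonal (marxSqrtJ n)⁻¹ := by
  refine inv_eq_left_inv ?_
  rw [marxJ, diagonal_mul_diagonal, diagonal_mul_diagonal, ← diagonal_one]
  congr 1
  funext j
  simp only [marxSqrtJ, Pi.inv_apply]
  split_ifs
  · rw [← mul_inv, Real.mul_self_sqrt n.cast_nonneg, inv_mul_cancel₀ (Nat.cast_pos.2 hn).ne']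
  · simp

theorem marxJm_mul_self : marxJm n * marxJm n = 1 := by
  rw [marxJm, diagonal_mul_diagonal, ← diagonal_one]
  congr 1
  funext j
  split_ifs <;> simp

theorem marxSigma_mul_apply {α : Type*} (M : Matrix (Fin (n + 1)) α ℝ) (i : Fin n) (a : α) :
    (marxSigma n * M) i a = M i.castSucc a - M i.succ a := by
  have h : ∀ j, marxSigma n i j * M j a =
      (if j = i.castSucc then M j a else 0) - (if j = i.succ then M j a else 0) := by
    intro j
    simp only [marxSigma, of_apply, Fin.ext_iff, Fin.val_castSucc, Fin.val_succ]
    split_ifs <;> first | (exfalso; omega) | ring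
  simp [mul_apply, h, Finset.sum_sub_distrib]

theorem marxSigma_mul_inv_marxJ_mul_transpose (hn : 1 ≤ n) :
    marxSigma n * (marxJ n)⁻¹ * (marxSigma n)ᵀ = marxB n := by
  have hn0 : (n : ℝ) ≠ 0 := (Nat.cast_pos.2 hn).ne'
  have hsq : (√n)⁻¹ * (√n)⁻¹ = (n : ℝ)⁻¹ := by rw [← mul_inv, Real.mul_self_sqrt n.cast_nonneg]
  ext i k
  rw [Matrix.mul_assoc, marxSigma_mul_apply, inv_marxJ hn, diagonal_mul_diagonal]
  simp only [diagonal_mul, transpose_apply, Pi.inv_apply, marxSqrtJ, marxSigma, marxB, of_apply,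
    Fin.val_castSucc, Fin.val_succ, Fin.ext_iff]
  split_ifs <;> first | (exfalso; omega) | (norm_num [hsq]; done) | (norm_num [hsq]; field_simp)

theorem marxSigma_mul_cumsum :
    marxSigma n * of (fun (j : Fin (n + 1)) (i : Fin n) => if (j : ℕ) ≤ i then (1 : ℝ) else 0) =
      1 := by
  ext i k
  rw [marxSigma_mul_apply]
  simp only [of_apply, one_apply, Fin.val_castSucc, Fin.val_succ, Fin.ext_iff]
  split_ifs <;> first | (exfalso; omega) | norm_num

theorem marxK_mul_marxZ (hn : 1 ≤ n) (f : Fin n → ℝ) : marxK n f * marxZ n = 0 := by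
  ext i a
  simp [marxK, marxZ, Matrix.mul_assoc, marxSigma_mul_apply, (marxSqrtJ_pos hn _).ne']

theorem marxK_mul_transpose (hn : 1 ≤ n) (f : Fin n → ℝ) :
    marxK n f * (marxK n f)ᵀ =
      diagonal (fun i => √(f i)) * marxB n * diagonal (fun i => √(f i)) := by
  rw [← marxSigma_mul_inv_marxJ_mul_transpose hn, inv_marxJ hn]
  simp only [marxK, transpose_mul, diagonal_transpose, Matrix.mul_assoc]

theorem posDef_marxK_mul_transpose (hn : 1 ≤ n) {f : Fin n → ℝ} (hf : ∀ i, 0 < f i) :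
    (marxK n f * (marxK n f)ᵀ).PosDef := by
  refine posDef_mul_transpose_of_mul_eq_one (B := diagonal (marxSqrtJ n) *
    of (fun (j : Fin (n + 1)) (i : Fin n) => if (j : ℕ) ≤ i then (1 : ℝ) else 0) *
    diagonal (fun i => √(f i))⁻¹) ?_
  simp only [marxK, Matrix.mul_assoc]
  rw [← Matrix.mul_assoc (diagonal _⁻¹),
    diagonal_inv_mul_diagonal fun j => (marxSqrtJ_pos hn j).ne', Matrix.one_mul,
    ← Matrix.mul_assoc (marxSigma n), marxSigma_mul_cumsum, Matrix.one_mul, diagonal_mul_diagonal,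
    ← diagonal_one]
  exact congrArg diagonal (funext fun i => mul_inv_cancel₀ (Real.sqrt_pos.2 (hf i)).ne')

theorem isUnit_det_transpose_mul_self_marxZ (hn : 1 ≤ n) :
    IsUnit ((marxZ n)ᵀ * marxZ n).det := by
  rw [det_unique, isUnit_iff_ne_zero]
  refine (Finset.sum_pos (fun j _ => ?_) (Finset.univ_nonempty (α := Fin (n + 1)))).ne'
  simpa [marxZ] using mul_pos (marxSqrtJ_pos hn j) (marxSqrtJ_pos hn j)

theorem marxA0_eq_circuitMatrix (hn : 1 ≤ n) (ℓ c : ℝ) {f : Fin n → ℝ} (hf : ∀ i, 0 < f i) :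
    marxA0 n ℓ c f = circuitMatrix (1 / c) (1 / ℓ)
      (diagonal (fun i => √(f i)) * marxK n f * (diagonal (marxSqrtJ n) * marxJm n))
      (marxJm n * diagonal (marxSqrtJ n)⁻¹ * (marxK n f)ᵀ * diagonal (fun i => √(f i))⁻¹) := by
  have hX : diagonal f * marxSigma n * marxJm n =
      diagonal (fun i => √(f i)) * marxK n f * (diagonal (marxSqrtJ n) * marxJm n) := by
    ext i j
    simp [marxK, marxJm, Matrix.mul_assoc, (marxSqrtJ_pos hn _).ne', Real.mul_self_sqrt (hf i).le,
      ← mul_assoc]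
  have hY : (marxJ n)⁻¹ * marxJm n * (marxSigma n)ᵀ =
      marxJm n * diagonal (marxSqrtJ n)⁻¹ * (marxK n f)ᵀ * diagonal (fun i => √(f i))⁻¹ := by
    ext i j
    simp [inv_marxJ hn, marxK, marxJm, Matrix.mul_assoc, transpose_mul,
      (Real.sqrt_pos.2 (hf j)).ne', ← mul_assoc]
  rw [marxA0, hX, hY, circuitMatrix]

theorem exists_marxA0_mul_eq_mul_skewGenerator (hn : 1 ≤ n) {ℓ c ω₀ : ℝ} (hℓ : 0 < ℓ)
    (hc : 0 < c) {f : Fin n → ℝ} (hf : ∀ i, 0 < f i) (hω₀ : ω₀ = 1 / √(ℓ * c)) :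
    ∃ T, IsUnit T.det ∧ marxA0 n ℓ c f * T = T * (ω₀ • skewGenerator (marxK n f)) := by
  have hE := diagonal_inv_mul_diagonal fun i => (Real.sqrt_pos.2 (hf i)).ne'
  have hD : marxJm n * diagonal (marxSqrtJ n)⁻¹ * (diagonal (marxSqrtJ n) * marxJm n) = 1 := by
    rw [Matrix.mul_assoc, ← Matrix.mul_assoc (diagonal _),
      diagonal_inv_mul_diagonal fun j => (marxSqrtJ_pos hn j).ne', Matrix.one_mul, marxJm_mul_self]
  have hω : 1 / c * (c * ω₀) = ω₀ := by field_simp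
  have hω' : 1 / c * (c * ω₀) * (c * ω₀) = 1 / ℓ := by
    rw [hω, hω₀]
    field_simp
    rw [Real.sq_sqrt (by positivity)]
  refine ⟨circuitScaling (diagonal fun i => √(f i)) (marxJm n * diagonal (marxSqrtJ n)⁻¹)
    (c * ω₀), isUnit_det_circuitScaling (isUnit_det_of_left_inverse hE)
      (isUnit_det_of_right_inverse hD) (isUnit_iff_ne_zero.2 (by rw [hω₀]; positivity)), ?_⟩
  rw [marxA0_eq_circuitMatrix hn ℓ c hf, ← hω',
    circuitMatrix_mul_circuitScaling _ _ _ hE (mul_eq_one_comm.1 hD), hω]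

end Marx

/-- there is an invertible real `N` with `Nᵀ·N = I + √F·B·√F`
such that `A₀` is similar over ℝ (after a bijective reindexing of coordinates)
to `ω₀ · blockdiag(0ₙ, [[0,1],[−1,0]], [[0, Nᵀ],[−N, 0]])`. -/
theorem statement15 (n : ℕ) (hn : 1 ≤ n) (ℓ c : ℝ) (hℓ : 0 < ℓ) (hc : 0 < c)
    (f : Fin n → ℝ) (hf : ∀ i, 0 < f i)
    (ω₀ : ℝ) (hω₀ : ω₀ = 1 / Real.sqrt (ℓ * c)) :
    ∃ N : Matrix (Fin n) (Fin n) ℝ, IsUnit N.det ∧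
      Nᵀ * N = 1 + Matrix.diagonal (fun i => Real.sqrt (f i)) * marxB n *
        Matrix.diagonal (fun i => Real.sqrt (f i)) ∧
      ∃ (e : ((Fin n ⊕ Fin (n + 1)) ⊕ Fin (n + 1)) ≃ (Fin n ⊕ (Fin 2 ⊕ (Fin n ⊕ Fin n))))
        (P : Matrix (Fin n ⊕ (Fin 2 ⊕ (Fin n ⊕ Fin n)))
          (Fin n ⊕ (Fin 2 ⊕ (Fin n ⊕ Fin n))) ℝ), IsUnit P.det ∧
        P * (Matrix.reindex e e (marxA0 n ℓ c f)) * P⁻¹ =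
          ω₀ • Matrix.fromBlocks (0 : Matrix (Fin n) (Fin n) ℝ) 0 0
            (Matrix.fromBlocks !![(0 : ℝ), 1; -1, 0] 0 0
              (Matrix.fromBlocks (0 : Matrix (Fin n) (Fin n) ℝ) Nᵀ (-N) 0)) := by
  obtain ⟨T, hT, hA⟩ := exists_marxA0_mul_eq_mul_skewGenerator hn hℓ hc hf hω₀
  have hK := posDef_marxK_mul_transpose hn hf
  obtain ⟨N, hNu, hN⟩ :=
    exists_isUnit_det_transpose_mul_self_eq (PosDef.one.add_posSemidef hK.posSemidef)
  refine ⟨N, hNu, by rw [hN, marxK_mul_transpose hn], Fintype.equivOfCardEq (by simp; omega), ?_⟩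
  rw [← reindex_skewNormalForm]
  have hZ := marxK_mul_marxZ hn f
  refine exists_conj_reindex_eq_of_mul_eq _ _ (M := ω₀ • skewNormalForm N)
    (isUnit_det_reindex_mul _ _ hT (isUnit_det_transpose_mul_self_skewBasis _ _ _ hZ hN
      (isUnit_iff_ne_zero.2 hK.det_pos.ne') (isUnit_det_transpose_mul_self_marxZ hn) hNu)) ?_
  rw [← Matrix.mul_assoc, hA, Matrix.mul_assoc, smul_mul, skewGenerator_mul_skewBasis _ _ _ hZ hN,
    Matrix.mul_smul, Matrix.mul_smul, Matrix.mul_assoc]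

end
end
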